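/- arXiv:2403.06183 — 3 statements merged into one kernel-verified Lean document; each statement's English description precedes it below -/
import Mathlib

section
/- Let f: ℝ^d → ℝ be twice continuously differentiable and suppose there exists a positive semidefinite matrix H such that for all w, (∇²f(w))(∇²f(w))ᵀ ⪯ H. Then for all w, w' ∈ ℝ^d, ‖∇f(w) - ∇f(w')‖² ≤ (w - w')ᵀ H (w - w'). -/
/-!
By symmetry of second derivatives the Hessian `M w` is a symmetric matrix, so
`vᵀ (M w) (M w)ᵀ v = ‖M w v‖²` and the hypothesis gives `‖M w v‖² ≤ vᵀ H v` at every point `w`.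
Since `t ↦ g (w' + t (w - w'))` has derivative `M x (w - w')`, the mean value inequality on
`[0, 1]` bounds `‖g w - g w'‖` by `√((w - w')ᵀ H (w - w'))`.
-/

open scoped Matrix

theorem isSymmetric_of_hasFDerivAt_gradient {E : Type*} [NormedAddCommGroup E]
    [InnerProductSpace ℝ E] [CompleteSpace E] {f : E → ℝ} {g : E → E} {A : E →L[ℝ] E} {x : E}
    (hg : ∀ y, HasGradientAt f (g y) y) (hA : HasFDerivAt g A x) :
    (A : E →ₗ[ℝ] E).IsSymmetric := by
  have hf : ∀ y, HasFDerivAt f (innerSL ℝ (g y)) y := fun y => (hg y).hasFDerivAt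
  intro u v
  exact (second_derivative_symmetric hf ((innerSL ℝ).hasFDerivAt.comp x hA) u v).trans
    (real_inner_comm _ _)

theorem norm_toEuclideanCLM_transpose_sq_le {n : Type*} [Fintype n] [DecidableEq n]
    {M H : Matrix n n ℝ} (hMH : (H - M * Mᵀ).PosSemidef) (v : EuclideanSpace ℝ n) :
    ‖Matrix.toEuclideanCLM (𝕜 := ℝ) Mᵀ v‖ ^ 2 ≤
      inner (𝕜 := ℝ) v (Matrix.toEuclideanCLM (𝕜 := ℝ) H v) := by
  have hnonneg := hMH.dotProduct_mulVec_nonneg (WithLp.ofLp v)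
  have hgram : Mᵀ *ᵥ v.ofLp ⬝ᵥ Mᵀ *ᵥ v.ofLp = v.ofLp ⬝ᵥ (M * Mᵀ) *ᵥ v.ofLp := by
    rw [← Matrix.mulVec_mulVec, Matrix.dotProduct_mulVec v.ofLp M, ← Matrix.mulVec_transpose]
  rw [star_trivial, Matrix.sub_mulVec, dotProduct_sub, sub_nonneg] at hnonneg
  rw [← real_inner_self_eq_norm_sq, Matrix.inner_toEuclideanCLM,
    EuclideanSpace.inner_eq_star_dotProduct]
  simpa only [star_trivial, Matrix.ofLp_toEuclideanCLM, dotProduct_comm _ (WithLp.ofLp v),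
    hgram] using hnonneg

theorem norm_add_sub_le_of_norm_hasFDerivAt_apply_le {E F : Type*} [NormedAddCommGroup E]
    [NormedSpace ℝ E] [NormedAddCommGroup F] [NormedSpace ℝ F] {g : E → F} {g' : E → E →L[ℝ] F}
    {C : ℝ} (hg : ∀ y, HasFDerivAt g (g' y) y) (x v : E) (hC : ∀ y, ‖g' y v‖ ≤ C) :
    ‖g (x + v) - g x‖ ≤ C := by
  have hline : ∀ t : ℝ, HasDerivAt (fun t : ℝ => x + t • v) v t := fun t => by
    simpa using ((hasDerivAt_id t).smul_const v).const_add x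
  have hderiv : ∀ t ∈ Set.Icc (0 : ℝ) 1,
      HasDerivWithinAt (fun t => g (x + t • v)) (g' (x + t • v) v) (Set.Icc 0 1) t :=
    fun t _ => ((hg _).comp_hasDerivAt t (hline t)).hasDerivWithinAt
  simpa using norm_image_sub_le_of_norm_deriv_le_segment_01' hderiv fun t _ => hC _

theorem stmt1_general {d : ℕ} (f : EuclideanSpace ℝ (Fin d) → ℝ)
    (g : EuclideanSpace ℝ (Fin d) → EuclideanSpace ℝ (Fin d))
    (M : EuclideanSpace ℝ (Fin d) → Matrix (Fin d) (Fin d) ℝ)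
    (H : Matrix (Fin d) (Fin d) ℝ)
    (hg : ∀ w, HasGradientAt f (g w) w)
    (hM : ∀ w, HasFDerivAt g (Matrix.toEuclideanCLM (𝕜 := ℝ) (M w)) w)
    (hMH : ∀ w, (H - M w * (M w)ᵀ).PosSemidef) :
    ∀ w w' : EuclideanSpace ℝ (Fin d),
      ‖g w - g w'‖ ^ 2 ≤
        inner (𝕜 := ℝ) (w - w') (Matrix.toEuclideanCLM (𝕜 := ℝ) H (w - w')) := by
  intro w w'
  set q := inner (𝕜 := ℝ) (w - w') (Matrix.toEuclideanCLM (𝕜 := ℝ) H (w - w'))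
  have hsymm (x) : (M x)ᵀ = M x := by
    simpa only [Matrix.conjTranspose_eq_transpose_of_trivial] using
      (Matrix.isSymmetric_toEuclideanLin_iff.1 (isSymmetric_of_hasFDerivAt_gradient hg (hM x))).eq
  have hbound (x) : ‖Matrix.toEuclideanCLM (𝕜 := ℝ) (M x) (w - w')‖ ^ 2 ≤ q := by
    simpa only [hsymm x] using norm_toEuclideanCLM_transpose_sq_le (hMH x) (w - w')
  have hq : 0 ≤ q := (sq_nonneg _).trans (hbound w)
  have hmvt := norm_add_sub_le_of_norm_hasFDerivAt_apply_le hM w' (w - w')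
    fun x => (Real.le_sqrt (norm_nonneg _) hq).2 (hbound x)
  rw [add_sub_cancel] at hmvt
  exact (Real.le_sqrt (norm_nonneg _) hq).1 hmvt

/-- If `f : ℝ^d → ℝ` is C² and its Hessian `M w` satisfies `(M w)(M w)ᵀ ⪯ H` for a PSD
matrix `H`, then `‖∇f(w) - ∇f(w')‖² ≤ (w - w')ᵀ H (w - w')`. -/
theorem stmt1 {d : ℕ} (f : EuclideanSpace ℝ (Fin d) → ℝ)
    (g : EuclideanSpace ℝ (Fin d) → EuclideanSpace ℝ (Fin d))
    (M : EuclideanSpace ℝ (Fin d) → Matrix (Fin d) (Fin d) ℝ)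
    (H : Matrix (Fin d) (Fin d) ℝ)
    (hH : H.PosSemidef)
    (hf : ContDiff ℝ 2 f)
    (hg : ∀ w, HasGradientAt f (g w) w)
    (hM : ∀ w, HasFDerivAt g (Matrix.toEuclideanCLM (𝕜 := ℝ) (M w)) w)
    (hMH : ∀ w, (H - M w * (M w)ᵀ).PosSemidef) :
    ∀ w w' : EuclideanSpace ℝ (Fin d),
      ‖g w - g w'‖ ^ 2 ≤
        inner (𝕜 := ℝ) (w - w') (Matrix.toEuclideanCLM (𝕜 := ℝ) H (w - w')) :=
  stmt1_general f g M H hg hM hMH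
end

section
/- Let f: ℝ^d → ℝ be C² with Hessian satisfying 0 ⪯ ∇²f(w)(∇²f(w))ᵀ ⪯ H for a fixed PSD matrix H with PSD square root H^{1/2}. Fix m > 0, t > 0, define w̄(t, w₀) = e^{-mt} w₀ - ((1 - e^{-mt})/m) ∇f(w₀). Then ‖∇f(w̄(t, w₀)) - ∇f(w₀)‖² ≤ ((1 - e^{-mt})/m)² · (m w₀ + ∇f(w₀))ᵀ H (m w₀ + ∇f(w₀)). -/
open scoped Matrix

/-!
Put `u = w̄(t, w₀) - w₀ = -((1 - e^{-mt})/m) (m w₀ + ∇f(w₀))`. The derivative of `∇f` is the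
Hessian `∇²f(w)`, which is symmetric, so `‖∇²f(w) u‖² = uᵀ ∇²f(w) ∇²f(w)ᵀ u ≤ uᵀ H u` at every
point. The mean value inequality along the segment from `w₀` to `w₀ + u` then bounds
`‖∇f(w₀ + u) - ∇f(w₀)‖²` by `uᵀ H u`, which is the right-hand side.
-/

theorem isSelfAdjoint_of_hasGradientAt_of_hasFDerivAt {E : Type*} [NormedAddCommGroup E]
    [InnerProductSpace ℝ E] [CompleteSpace E] {f : E → ℝ} {g : E → E} {A : E →L[ℝ] E} {w : E}
    (hg : ∀ y, HasGradientAt f (g y) y) (hA : HasFDerivAt g A w) : IsSelfAdjoint A := by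
  have hf' : ∀ y, HasFDerivAt f (innerSL ℝ (g y)) y := fun y => (hg y).hasFDerivAt
  have hsymm := second_derivative_symmetric hf' ((innerSL ℝ).hasFDerivAt.comp w hA)
  rw [ContinuousLinearMap.isSelfAdjoint_iff_isSymmetric]
  exact fun u v => (hsymm u v).trans (real_inner_comm u (A v))

theorem norm_sub_sq_le_of_forall_norm_fderiv_apply_sq_le {E F : Type*} [NormedAddCommGroup E]
    [NormedSpace ℝ E] [NormedAddCommGroup F] [NormedSpace ℝ F] {g : E → F} {A : E → E →L[ℝ] F}
    {u : E} {Q : ℝ} (hg : ∀ w, HasFDerivAt g (A w) w) (hA : ∀ w, ‖A w u‖ ^ 2 ≤ Q) (x : E) :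
    ‖g (x + u) - g x‖ ^ 2 ≤ Q := by
  have hQ : 0 ≤ Q := (sq_nonneg _).trans (hA x)
  have hline : ∀ s : ℝ, HasDerivAt (fun s : ℝ => g (x + s • u)) (A (x + s • u) u) s := fun s =>
    (hg _).comp_hasDerivAt s (((hasDerivAt_id s).smul_const u).const_add x |>.congr_deriv
      (one_smul ℝ u))
  have hmvt := convex_univ.norm_image_sub_le_of_norm_hasDerivWithin_le
    (fun s _ => (hline s).hasDerivWithinAt)
    (fun s _ => (Real.le_sqrt (norm_nonneg _) hQ).mpr (hA (x + s • u)))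
    (Set.mem_univ 0) (Set.mem_univ 1)
  simp only [one_smul, zero_smul, add_zero, sub_zero, norm_one, mul_one] at hmvt
  calc ‖g (x + u) - g x‖ ^ 2 ≤ √Q ^ 2 := pow_le_pow_left₀ (norm_nonneg _) hmvt 2
    _ = Q := Real.sq_sqrt hQ

namespace Matrix

variable {n : Type*} [Fintype n] [DecidableEq n]

theorem inner_toEuclideanCLM_self_nonneg {P : Matrix n n ℝ} (hP : P.PosSemidef)
    (x : EuclideanSpace ℝ n) : 0 ≤ inner ℝ x (toEuclideanCLM (𝕜 := ℝ) P x) := by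
  simpa [inner_toEuclideanCLM] using hP.dotProduct_mulVec_nonneg x.ofLp

theorem norm_toEuclideanCLM_apply_sq (M : Matrix n n ℝ) (u : EuclideanSpace ℝ n) :
    ‖toEuclideanCLM (𝕜 := ℝ) M u‖ ^ 2 = inner ℝ u (toEuclideanCLM (𝕜 := ℝ) (Mᵀ * M) u) := by
  rw [← real_inner_self_eq_norm_sq, map_mul, ← conjTranspose_eq_transpose_of_trivial M,
    ← star_eq_conjTranspose, map_star, mul_apply_eq_comp, ContinuousLinearMap.star_eq_adjoint,
    ContinuousLinearMap.adjoint_inner_right]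

theorem norm_toEuclideanCLM_apply_sq_le {M H : Matrix n n ℝ} (hMH : (H - M * Mᵀ).PosSemidef)
    (hM : IsSelfAdjoint (toEuclideanCLM (𝕜 := ℝ) M)) (u : EuclideanSpace ℝ n) :
    ‖toEuclideanCLM (𝕜 := ℝ) M u‖ ^ 2 ≤ inner ℝ u (toEuclideanCLM (𝕜 := ℝ) H u) := by
  have hMt : Mᵀ = M := by
    rw [← conjTranspose_eq_transpose_of_trivial M, ← star_eq_conjTranspose]
    exact EquivLike.injective (toEuclideanCLM (n := n) (𝕜 := ℝ)) (by rw [map_star, hM.star_eq])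
  have hnonneg := inner_toEuclideanCLM_self_nonneg hMH u
  rw [map_sub, _root_.sub_apply, inner_sub_right, hMt] at hnonneg
  rw [norm_toEuclideanCLM_apply_sq, hMt]
  linarith

end Matrix

theorem stmt8_general {d : ℕ} (f : EuclideanSpace ℝ (Fin d) → ℝ)
    (g : EuclideanSpace ℝ (Fin d) → EuclideanSpace ℝ (Fin d))
    (M : EuclideanSpace ℝ (Fin d) → Matrix (Fin d) (Fin d) ℝ)
    (H : Matrix (Fin d) (Fin d) ℝ)
    (hg : ∀ w, HasGradientAt f (g w) w)
    (hM : ∀ w, HasFDerivAt g (Matrix.toEuclideanCLM (𝕜 := ℝ) (M w)) w)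
    (hMH : ∀ w, (H - M w * (M w)ᵀ).PosSemidef)
    (m t : ℝ) :
    ∀ w₀ : EuclideanSpace ℝ (Fin d),
      ‖g (Real.exp (-(m * t)) • w₀ - ((1 - Real.exp (-(m * t))) / m) • g w₀) - g w₀‖ ^ 2 ≤
        ((1 - Real.exp (-(m * t))) / m) ^ 2 *
          inner (𝕜 := ℝ) (m • w₀ + g w₀)
            (Matrix.toEuclideanCLM (𝕜 := ℝ) H (m • w₀ + g w₀)) := by
  intro w₀
  set c := (1 - Real.exp (-(m * t))) / m
  set v := m • w₀ + g w₀
  have hcm : c * m = 1 - Real.exp (-(m * t)) :=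
    div_mul_cancel_of_imp fun hm => by simp [hm]
  have hstep : Real.exp (-(m * t)) • w₀ - c • g w₀ = w₀ + -(c • v) := by
    match_scalars <;> linarith
  have hbound := norm_sub_sq_le_of_forall_norm_fderiv_apply_sq_le hM
    (fun w => Matrix.norm_toEuclideanCLM_apply_sq_le (hMH w)
      (isSelfAdjoint_of_hasGradientAt_of_hasFDerivAt hg (hM w)) (-(c • v))) w₀
  rw [hstep]
  simpa only [map_neg, map_smul, inner_neg_neg, real_inner_smul_left, real_inner_smul_right,
    ← mul_assoc, ← sq] using hbound

/-- For `f` C² with `0 ⪯ (∇²f)(∇²f)ᵀ ⪯ H` (PSD `H`), `m, t > 0`, and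
`w̄(t,w₀) = e^{-mt} w₀ - ((1-e^{-mt})/m) ∇f(w₀)`, one has
`‖∇f(w̄(t,w₀)) - ∇f(w₀)‖² ≤ ((1-e^{-mt})/m)² (m w₀ + ∇f(w₀))ᵀ H (m w₀ + ∇f(w₀))`. -/
theorem stmt8 {d : ℕ} (f : EuclideanSpace ℝ (Fin d) → ℝ)
    (g : EuclideanSpace ℝ (Fin d) → EuclideanSpace ℝ (Fin d))
    (M : EuclideanSpace ℝ (Fin d) → Matrix (Fin d) (Fin d) ℝ)
    (H : Matrix (Fin d) (Fin d) ℝ)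
    (hH : H.PosSemidef)
    (hf : ContDiff ℝ 2 f)
    (hg : ∀ w, HasGradientAt f (g w) w)
    (hM : ∀ w, HasFDerivAt g (Matrix.toEuclideanCLM (𝕜 := ℝ) (M w)) w)
    (hMpsd : ∀ w, (M w * (M w)ᵀ).PosSemidef)
    (hMH : ∀ w, (H - M w * (M w)ᵀ).PosSemidef)
    (m t : ℝ) (hm : 0 < m) (ht : 0 < t) :
    ∀ w₀ : EuclideanSpace ℝ (Fin d),
      ‖g (Real.exp (-(m * t)) • w₀ - ((1 - Real.exp (-(m * t))) / m) • g w₀) - g w₀‖ ^ 2 ≤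
        ((1 - Real.exp (-(m * t))) / m) ^ 2 *
          inner (𝕜 := ℝ) (m • w₀ + g w₀)
            (Matrix.toEuclideanCLM (𝕜 := ℝ) H (m • w₀ + g w₀)) :=
  stmt8_general f g M H hg hM hMH m t
end

section
/- Let f(w) = −log( (1/K) Σ_{i=1}^K exp(μᵢᵀ w − ‖μᵢ‖²/2) ) with ‖μᵢ‖ ≤ R for all i. Then 0 ⪯ −∇²f(w) ⪯ H^{1/2} where H^{1/2} := Σ_{1≤i≤j≤K} (μᵢ − μⱼ)(μᵢ − μⱼ)ᵀ, and Tr((H^{1/2})²) ≤ Tr(H^{1/2})² ≤ 16 K⁴ R⁴. -/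
/-!
Let `pᵢ(w) ∝ exp(⟨μᵢ, w⟩ − ‖μᵢ‖²/2)` be the posterior (softmax) weights. Then `∇f = −Σ pᵢ μᵢ`, and
differentiating the weights gives `−∇²f(w) = Σ pᵢ μᵢμᵢᵀ − (Σ pᵢ μᵢ)(Σ pᵢ μᵢ)ᵀ`, the covariance of
`μ` under `p`. In a direction `x` its quadratic form is the variance of `tᵢ = ⟨μᵢ, x⟩`, which equals
`½ Σᵢⱼ pᵢpⱼ (tᵢ − tⱼ)²`: this is nonnegative, and at most `Σ_{i≤j} (tᵢ − tⱼ)² = xᵀ H^{1/2} x`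
because `pᵢpⱼ ≤ 1`. As `H^{1/2}` is positive semidefinite, `Tr((H^{1/2})²) = Σ λ² ≤ (Σ λ)²`, and
`Tr H^{1/2}` is a sum of at most `K²` terms `‖μᵢ − μⱼ‖² ≤ 4R²`.
-/

open scoped Matrix RealInnerProductSpace
open Finset Real InnerProductSpace

theorem sum_sum_mul_mul_sub_sq {ι : Type*} (s : Finset ι) (p t : ι → ℝ) :
    ∑ i ∈ s, ∑ j ∈ s, p i * p j * (t i - t j) ^ 2 =
      2 * ((∑ i ∈ s, p i) * ∑ i ∈ s, p i * t i ^ 2 - (∑ i ∈ s, p i * t i) ^ 2) := by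
  have h : ∀ i j, p i * p j * (t i - t j) ^ 2 =
      p j * (p i * t i ^ 2) + p i * (p j * t j ^ 2) - 2 * ((p i * t i) * (p j * t j)) :=
    fun i j => by ring
  simp only [h, sum_add_distrib, sum_sub_distrib, ← mul_sum, ← sum_mul]
  rw [sq (∑ i ∈ s, p i * t i), sum_mul_sum]
  ring

section Variance

variable {ι : Type*} [Fintype ι] {p : ι → ℝ} (t : ι → ℝ)

theorem sq_sum_mul_le_sum_mul_sq (hp : ∀ i, 0 ≤ p i) (hp1 : ∑ i, p i = 1) :
    (∑ i, p i * t i) ^ 2 ≤ ∑ i, p i * t i ^ 2 := by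
  have h := sum_sum_mul_mul_sub_sq univ p t
  rw [hp1, one_mul] at h
  have : 0 ≤ ∑ i, ∑ j, p i * p j * (t i - t j) ^ 2 :=
    sum_nonneg fun i _ => sum_nonneg fun j _ => by have := hp i; have := hp j; positivity
  linarith

theorem sum_mul_sq_sub_sq_sum_mul_le [LinearOrder ι] (hp : ∀ i, 0 ≤ p i) (hp1 : ∑ i, p i = 1) :
    ∑ i, p i * t i ^ 2 - (∑ i, p i * t i) ^ 2 ≤
      ∑ i, ∑ j, if i ≤ j then (t i - t j) ^ 2 else 0 := by
  have hp_le_one : ∀ i, p i ≤ 1 := fun i => hp1 ▸ single_le_sum (fun j _ => hp j) (mem_univ i)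
  have hterm : ∀ i j, p i * p j * (t i - t j) ^ 2 ≤
      (if i ≤ j then (t i - t j) ^ 2 else 0) + (if j ≤ i then (t j - t i) ^ 2 else 0) := by
    intro i j
    have hsq : p i * p j * (t i - t j) ^ 2 ≤ (t i - t j) ^ 2 :=
      mul_le_of_le_one_left (sq_nonneg _) (mul_le_one₀ (hp_le_one i) (hp j) (hp_le_one j))
    rcases lt_trichotomy i j with h | rfl | h
    · simp [h.le, not_le.mpr h, hsq]
    · simp
    · simp [h.le, not_le.mpr h, sub_sq_comm, hsq]
  have h := sum_sum_mul_mul_sub_sq univ p t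
  rw [hp1, one_mul] at h
  have := sum_le_sum fun i (_ : i ∈ univ) => sum_le_sum fun j (_ : j ∈ univ) => hterm i j
  simp only [sum_add_distrib] at this
  rw [sum_comm (f := fun i j => if j ≤ i then (t j - t i) ^ 2 else 0)] at this
  linarith

end Variance

section Covariance

variable {E : Type*} [NormedAddCommGroup E] [InnerProductSpace ℝ E] {ι : Type*} [Fintype ι]

theorem ContinuousLinearMap.le_of_forall_inner_apply_self_le {S T : E →L[ℝ] E}
    (hS : S.IsSymmetric) (hT : T.IsSymmetric) (h : ∀ x, ⟪S x, x⟫ ≤ ⟪T x, x⟫) : S ≤ T := by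
  rw [ContinuousLinearMap.le_def, ContinuousLinearMap.isPositive_iff]
  refine ⟨?_, fun x => ?_⟩
  · simpa using hT.sub hS
  · simpa [inner_sub_left] using h x

noncomputable def weightedCov (p : ι → ℝ) (μ : ι → E) : E →L[ℝ] E :=
  ∑ i, p i • rankOne ℝ (μ i) (μ i) - rankOne ℝ (∑ i, p i • μ i) (∑ i, p i • μ i)

variable {p : ι → ℝ} (μ : ι → E)

theorem isSymmetric_weightedCov : (weightedCov p μ).IsSymmetric := by
  simp only [weightedCov, ContinuousLinearMap.toLinearMap_sub, ContinuousLinearMap.toLinearMap_sum,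
    ContinuousLinearMap.toLinearMap_smul]
  exact (LinearMap.isSymmetric_sum _ fun i _ => (isSymmetric_rankOne_self _).smul
    (conj_trivial _)).sub (isSymmetric_rankOne_self _)

theorem inner_weightedCov_apply_self (x : E) :
    ⟪weightedCov p μ x, x⟫ = ∑ i, p i * ⟪μ i, x⟫ ^ 2 - (∑ i, p i * ⟪μ i, x⟫) ^ 2 := by
  simp only [weightedCov, map_sum, map_smul, _root_.sum_apply, smul_apply, sub_apply, rankOne_apply,
    inner_sub_left, sum_inner, inner_smul_left, ringHom_apply, sq, sub_right_inj]
  rw [sum_mul_sum]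
  exact sum_congr rfl fun i _ => by rw [mul_sum]; exact sum_congr rfl fun j _ => by ring

theorem weightedCov_nonneg (hp : ∀ i, 0 ≤ p i) (hp1 : ∑ i, p i = 1) : 0 ≤ weightedCov p μ :=
  ContinuousLinearMap.le_of_forall_inner_apply_self_le (by simp [LinearMap.IsSymmetric.zero])
    (isSymmetric_weightedCov μ) fun x => by
      simpa [inner_weightedCov_apply_self] using sq_sum_mul_le_sum_mul_sq _ hp hp1

theorem isPositive_sum_pairwise_rankOne [LinearOrder ι] :
    (∑ i, ∑ j, if i ≤ j then rankOne ℝ (μ i - μ j) (μ i - μ j) else 0 : E →L[ℝ] E).IsPositive :=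
  ContinuousLinearMap.isPositive_sum _ fun i _ => ContinuousLinearMap.isPositive_sum _ fun j _ => by
    split_ifs
    · exact isPositive_rankOne_self _
    · exact ContinuousLinearMap.isPositive_zero

theorem inner_sum_pairwise_rankOne_apply_self [LinearOrder ι] (x : E) :
    ⟪(∑ i, ∑ j, if i ≤ j then rankOne ℝ (μ i - μ j) (μ i - μ j) else 0 : E →L[ℝ] E) x, x⟫ =
      ∑ i, ∑ j, if i ≤ j then (⟪μ i, x⟫ - ⟪μ j, x⟫) ^ 2 else 0 := by
  simp only [FunLike.coe_sum, Finset.sum_apply, sum_inner]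
  refine sum_congr rfl fun i _ => sum_congr rfl fun j _ => ?_
  split_ifs
  · simp only [rankOne_apply, real_inner_smul_left, inner_sub_left]
    ring
  · simp

theorem weightedCov_le_sum_pairwise_rankOne [LinearOrder ι] (hp : ∀ i, 0 ≤ p i)
    (hp1 : ∑ i, p i = 1) :
    weightedCov p μ ≤ ∑ i, ∑ j, if i ≤ j then rankOne ℝ (μ i - μ j) (μ i - μ j) else 0 :=
  ContinuousLinearMap.le_of_forall_inner_apply_self_le (isSymmetric_weightedCov μ)
    (isPositive_sum_pairwise_rankOne μ).isSymmetric fun x => by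
      rw [inner_weightedCov_apply_self, inner_sum_pairwise_rankOne_apply_self]
      exact sum_mul_sq_sub_sq_sum_mul_le _ hp hp1

end Covariance

section Gradient

variable {F : Type*} [NormedAddCommGroup F] [InnerProductSpace ℝ F] [CompleteSpace F]
  {f : F → ℝ} {f' x : F}

theorem HasGradientAt.fun_neg (h : HasGradientAt f f' x) :
    HasGradientAt (fun x => -f x) (-f') x := by
  rw [hasGradientAt_iff_hasFDerivAt, map_neg]
  exact (hasGradientAt_iff_hasFDerivAt.mp h).fun_neg

theorem HasGradientAt.const_add (h : HasGradientAt f f' x) (c : ℝ) :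
    HasGradientAt (fun x => c + f x) f' x := by
  rw [hasGradientAt_iff_hasFDerivAt] at *
  exact h.const_add c

end Gradient

section Softmax

variable {E : Type*} [NormedAddCommGroup E] [InnerProductSpace ℝ E] {ι : Type*} [Fintype ι]

noncomputable def softmax (a : ι → ℝ) (i : ι) : ℝ := exp (a i) / ∑ j, exp (a j)

theorem sum_exp_pos [Nonempty ι] (a : ι → ℝ) : 0 < ∑ j, exp (a j) :=
  sum_pos (fun _ _ => exp_pos _) univ_nonempty

theorem softmax_nonneg (a : ι → ℝ) (i : ι) : 0 ≤ softmax a i := by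
  unfold softmax
  positivity

theorem sum_softmax [Nonempty ι] (a : ι → ℝ) : ∑ i, softmax a i = 1 := by
  simp only [softmax, ← sum_div, div_self (sum_exp_pos a).ne']

theorem hasFDerivAt_exp_inner_add (v : E) (c : ℝ) (w : E) :
    HasFDerivAt (fun w => exp (⟪v, w⟫ + c)) (exp (⟪v, w⟫ + c) • innerSL ℝ v) w :=
  ((innerSL ℝ v).hasFDerivAt.add_const c).exp

variable (μ : ι → E) (b : ι → ℝ)

theorem hasFDerivAt_sum_exp_inner_add (w : E) :
    HasFDerivAt (fun w => ∑ i, exp (⟪μ i, w⟫ + b i))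
      (∑ i, exp (⟪μ i, w⟫ + b i) • innerSL ℝ (μ i)) w :=
  HasFDerivAt.fun_sum fun i _ => hasFDerivAt_exp_inner_add (μ i) (b i) w

theorem hasGradientAt_log_sum_exp [CompleteSpace E] [Nonempty ι] (w : E) :
    HasGradientAt (fun w => log (∑ i, exp (⟪μ i, w⟫ + b i)))
      (∑ i, softmax (fun j => ⟪μ j, w⟫ + b j) i • μ i) w := by
  rw [hasGradientAt_iff_hasFDerivAt]
  refine ((hasFDerivAt_sum_exp_inner_add μ b w).log (sum_exp_pos _).ne').congr_fderiv ?_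
  ext x
  simp [softmax, div_eq_inv_mul, mul_sum, mul_assoc]

theorem hasFDerivAt_softmax [Nonempty ι] (w : E) (i : ι) :
    HasFDerivAt (fun w => softmax (fun j => ⟪μ j, w⟫ + b j) i)
      (softmax (fun j => ⟪μ j, w⟫ + b j) i •
        innerSL ℝ (μ i - ∑ j, softmax (fun j => ⟪μ j, w⟫ + b j) j • μ j)) w := by
  have hS := (sum_exp_pos fun j => ⟪μ j, w⟫ + b j).ne'
  have hinv := (hasDerivAt_inv hS).comp_hasFDerivAt w (hasFDerivAt_sum_exp_inner_add μ b w)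
  refine ((hasFDerivAt_exp_inner_add (μ i) (b i) w).mul hinv).congr_fderiv ?_
  ext x
  simp only [neg_smul, smul_neg, Function.comp_apply, add_apply, neg_apply, smul_apply,
    _root_.sum_apply, coe_innerSL_apply, smul_eq_mul, softmax, div_eq_inv_mul, map_sub, map_sum,
    map_smul, sub_apply, mul_assoc, ← mul_sum]
  field_simp
  ring

theorem hasFDerivAt_softmax_mean [Nonempty ι] (w : E) :
    HasFDerivAt (fun w => ∑ i, softmax (fun j => ⟪μ j, w⟫ + b j) i • μ i)
      (weightedCov (softmax fun j => ⟪μ j, w⟫ + b j) μ) w := by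
  refine (HasFDerivAt.fun_sum fun i _ =>
    (hasFDerivAt_softmax μ b w i).smul_const (μ i)).congr_fderiv ?_
  ext x
  set p := softmax fun j => ⟪μ j, w⟫ + b j
  set m := ∑ j, p j • μ j
  have hm : ∑ i, p i • ⟪m, x⟫ • μ i = ⟪m, x⟫ • m := by
    simp only [smul_comm (p _) ⟪m, x⟫, ← smul_sum, m]
  simp only [weightedCov, sub_apply, FunLike.coe_sum, Finset.sum_apply, FunLike.coe_smul,
    Pi.smul_apply, ContinuousLinearMap.smulRight_apply, innerSL_apply_apply, rankOne_apply,
    smul_eq_mul, inner_sub_left, mul_sub, sub_smul, sum_sub_distrib, mul_smul, hm]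
  rfl

theorem eq_neg_weightedCov_of_hasFDerivAt_gradient [CompleteSpace E] [Nonempty ι] {c : ℝ}
    {f : E → ℝ} {g : E → E} {D : E → E →L[ℝ] E}
    (hf : ∀ w, f w = -(c + log (∑ i, exp (⟪μ i, w⟫ + b i))))
    (hg : ∀ w, HasGradientAt f (g w) w) (hD : ∀ w, HasFDerivAt g (D w) w) (w : E) :
    D w = -weightedCov (softmax fun j => ⟪μ j, w⟫ + b j) μ := by
  obtain rfl : f = _ := funext hf
  have hg_eq : g = fun w => -∑ i, softmax (fun j => ⟪μ j, w⟫ + b j) i • μ i := funext fun w =>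
    (hg w).unique (((hasGradientAt_log_sum_exp μ b w).const_add c).fun_neg)
  exact (hD w).unique (hg_eq ▸ (hasFDerivAt_softmax_mean μ b w).fun_neg)

end Softmax

namespace Matrix

open scoped ComplexOrder in
theorem posSemidef_iff_nonneg_toEuclideanCLM {𝕜 n : Type*} [RCLike 𝕜] [Fintype n]
    [DecidableEq n] {A : Matrix n n 𝕜} : A.PosSemidef ↔ 0 ≤ toEuclideanCLM (𝕜 := 𝕜) A := by
  rw [ContinuousLinearMap.nonneg_iff_isPositive, ← isPositive_toEuclideanLin_iff,
    ← ContinuousLinearMap.isPositive_toLinearMap_iff, coe_toEuclideanCLM_eq_toEuclideanLin]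

theorem toEuclideanCLM_vecMulVec {n : Type*} [Fintype n] [DecidableEq n] (x y : n → ℝ) :
    toEuclideanCLM (𝕜 := ℝ) (vecMulVec x y) = rankOne ℝ (WithLp.toLp 2 x) (WithLp.toLp 2 y) := by
  apply ContinuousLinearMap.coe_injective
  rw [coe_toEuclideanCLM_eq_toEuclideanLin, eq_comm, ← LinearEquiv.symm_apply_eq]
  simpa using symm_toEuclideanLin_rankOne (𝕜 := ℝ) (WithLp.toLp 2 x) (WithLp.toLp 2 y)

theorem toEuclideanCLM_sum_pairwise_vecMulVec {n ι : Type*} [Fintype n] [DecidableEq n]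
    [Fintype ι] [LinearOrder ι] (μ : ι → EuclideanSpace ℝ n) :
    toEuclideanCLM (𝕜 := ℝ) (∑ i, ∑ j, if i ≤ j then
        vecMulVec (fun k => (μ i - μ j) k) (fun k => (μ i - μ j) k) else 0) =
      ∑ i, ∑ j, if i ≤ j then rankOne ℝ (μ i - μ j) (μ i - μ j) else 0 := by
  simp only [map_sum, apply_ite (toEuclideanCLM (𝕜 := ℝ)), map_zero, toEuclideanCLM_vecMulVec]

open scoped ComplexOrder in
theorem PosSemidef.trace_mul_self_le_sq_trace {𝕜 n : Type*} [RCLike 𝕜] [Fintype n]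
    [DecidableEq n] {A : Matrix n n 𝕜} (hA : A.PosSemidef) : (A * A).trace ≤ A.trace ^ 2 := by
  rw [hA.1.spectral_theorem, ← map_mul]
  simp only [Unitary.conjStarAlgAut_apply, trace_mul_cycle, Unitary.coe_star_mul_self, one_mul,
    diagonal_mul_diagonal, trace_diagonal]
  simp only [Function.comp_apply, ← RCLike.ofReal_sum, ← RCLike.ofReal_pow, RCLike.ofReal_le_ofReal,
    ← sq]
  exact sum_sq_le_sq_sum_of_nonneg fun i _ => hA.eigenvalues_nonneg i

theorem trace_vecMulVec_self {n : Type*} [Fintype n] (x : EuclideanSpace ℝ n) :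
    (vecMulVec (fun k => x k) (fun k => x k)).trace = ‖x‖ ^ 2 := by
  rw [EuclideanSpace.real_norm_sq_eq]
  simp [trace, vecMulVec_apply, sq]

theorem trace_sum_pairwise_vecMulVec_le {n ι : Type*} [Fintype n] [Fintype ι] [LinearOrder ι]
    (μ : ι → EuclideanSpace ℝ n) {R : ℝ} (hμ : ∀ i, ‖μ i‖ ≤ R) :
    (∑ i, ∑ j, if i ≤ j then
        vecMulVec (fun k => (μ i - μ j) k) (fun k => (μ i - μ j) k) else 0).trace ≤
      4 * Fintype.card ι ^ 2 * R ^ 2 := by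
  have hterm : ∀ i j, (if i ≤ j then ‖μ i - μ j‖ ^ 2 else 0) ≤ (R + R) ^ 2 := fun i j => by
    have hR : 0 ≤ R := (norm_nonneg _).trans (hμ i)
    split_ifs
    · exact pow_le_pow_left₀ (norm_nonneg _) ((norm_sub_le _ _).trans (add_le_add (hμ i) (hμ j))) 2
    · positivity
  simp only [trace_sum, apply_ite trace, trace_zero, trace_vecMulVec_self]
  calc _ ≤ ∑ _i : ι, ∑ _j : ι, (R + R) ^ 2 := sum_le_sum fun i _ => sum_le_sum fun j _ => hterm i j
    _ = _ := by simp only [sum_const, card_univ, nsmul_eq_mul]; ring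

end Matrix

/-- For the Gaussian-mixture potential
`f(w) = −log((1/K) Σᵢ exp(μᵢᵀ w − ‖μᵢ‖²/2))` with `‖μᵢ‖ ≤ R`, the Hessian `M w` of `f`
satisfies `0 ⪯ −M w ⪯ H^{1/2}` where
`H^{1/2} = Σ_{i ≤ j} (μᵢ − μⱼ)(μᵢ − μⱼ)ᵀ`, and
`Tr((H^{1/2})²) ≤ Tr(H^{1/2})² ≤ 16 K⁴ R⁴`. -/
theorem stmt17 {d K : ℕ} (hK : 0 < K)
    (μ : Fin K → EuclideanSpace ℝ (Fin d)) (R : ℝ) (hμ : ∀ i, ‖μ i‖ ≤ R)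
    (f : EuclideanSpace ℝ (Fin d) → ℝ)
    (hf : ∀ w, f w =
      -Real.log ((1 / (K : ℝ)) * ∑ i, Real.exp (inner (𝕜 := ℝ) (μ i) w - ‖μ i‖ ^ 2 / 2)))
    (g : EuclideanSpace ℝ (Fin d) → EuclideanSpace ℝ (Fin d))
    (M : EuclideanSpace ℝ (Fin d) → Matrix (Fin d) (Fin d) ℝ)
    (hg : ∀ w, HasGradientAt f (g w) w)
    (hM : ∀ w, HasFDerivAt g (Matrix.toEuclideanCLM (𝕜 := ℝ) (M w)) w)
    (Hhalf : Matrix (Fin d) (Fin d) ℝ)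
    (hHhalf : Hhalf = ∑ i, ∑ j, if i ≤ j then
        Matrix.vecMulVec (fun k => (μ i - μ j) k) (fun k => (μ i - μ j) k) else 0) :
    (∀ w, (-(M w)).PosSemidef) ∧ (∀ w, (Hhalf + M w).PosSemidef) ∧
      (Hhalf * Hhalf).trace ≤ Hhalf.trace ^ 2 ∧
      Hhalf.trace ^ 2 ≤ 16 * (K : ℝ) ^ 4 * R ^ 4 := by
  have : Nonempty (Fin K) := ⟨⟨0, hK⟩⟩
  have hf' : ∀ w, f w = -(log (1 / K) + log (∑ i, exp (⟪μ i, w⟫ + -(‖μ i‖ ^ 2 / 2)))) := by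
    intro w
    rw [hf, log_mul (by positivity) (sum_exp_pos _).ne']
    simp only [sub_eq_add_neg]
  have hM_eq := eq_neg_weightedCov_of_hasFDerivAt_gradient μ _ hf' hg hM
  have hM_nonneg : ∀ w, 0 ≤ -Matrix.toEuclideanCLM (𝕜 := ℝ) (M w) := fun w => by
    rw [hM_eq, neg_neg]
    exact weightedCov_nonneg μ (softmax_nonneg _) (sum_softmax _)
  have hM_le :
      ∀ w, -Matrix.toEuclideanCLM (𝕜 := ℝ) (M w) ≤ Matrix.toEuclideanCLM (𝕜 := ℝ) Hhalf :=
    fun w => by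
      rw [hM_eq, neg_neg, hHhalf, Matrix.toEuclideanCLM_sum_pairwise_vecMulVec]
      exact weightedCov_le_sum_pairwise_rankOne μ (softmax_nonneg _) (sum_softmax _)
  have hH : Hhalf.PosSemidef :=
    Matrix.posSemidef_iff_nonneg_toEuclideanCLM.mpr ((hM_nonneg 0).trans (hM_le 0))
  refine ⟨fun w => ?_, fun w => ?_, hH.trace_mul_self_le_sq_trace, ?_⟩
  · simpa [Matrix.posSemidef_iff_nonneg_toEuclideanCLM] using hM_nonneg w
  · simpa [Matrix.posSemidef_iff_nonneg_toEuclideanCLM, ContinuousLinearMap.nonneg_iff_isPositive]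
      using (ContinuousLinearMap.le_def _ _).mp (hM_le w)
  · have htr := hHhalf ▸ Matrix.trace_sum_pairwise_vecMulVec_le μ hμ
    rw [Fintype.card_fin] at htr
    calc Hhalf.trace ^ 2 ≤ (4 * (K : ℝ) ^ 2 * R ^ 2) ^ 2 := pow_le_pow_left₀ hH.trace_nonneg htr 2
      _ = 16 * (K : ℝ) ^ 4 * R ^ 4 := by ring
end
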